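/- arXiv:2411.10194 — 2 statements merged into one kernel-verified Lean document; each statement's English description precedes it below -/
import Mathlib

section
/- Let F be a finite field with q elements. For every matrix M = (a b; c d) in SL₂(F), the substitution X ↦ aX + bY, Y ↦ cX + dY, Z ↦ Z fixes the homogeneous polynomial XY^q − X^qY − Z^{q+1} in F[X,Y,Z]. -/
open MvPolynomial

/-- Let `F` be a finite field with `q` elements. Every matrix `M = (a b; c d) ∈ SL₂(F)` fixes the
homogeneous polynomial `XY^q − X^qY − Z^{q+1}` in `F[X,Y,Z]` under the substitution
`X ↦ aX + bY, Y ↦ cX + dY, Z ↦ Z`. -/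
theorem drinfeld_curve_sl2_invariance
    {F : Type*} [Field F] [Fintype F] (q : ℕ) (hq : q = Fintype.card F)
    (M : Matrix.SpecialLinearGroup (Fin 2) F) :
    bind₁ ![C (M.1 0 0) * X 0 + C (M.1 0 1) * X 1,
            C (M.1 1 0) * X 0 + C (M.1 1 1) * X 1,
            X 2]
        (X 0 * X 1 ^ q - X 0 ^ q * X 1 - X 2 ^ (q + 1) : MvPolynomial (Fin 3) F)
      = X 0 * X 1 ^ q - X 0 ^ q * X 1 - X 2 ^ (q + 1) := by
  obtain ⟨p, hpc⟩ := CharP.exists F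
  haveI : CharP F p := hpc
  obtain ⟨n, hp, hcard⟩ := FiniteField.card F p
  haveI := Fact.mk hp
  have frob : ∀ u v : MvPolynomial ℕ F, (u + v) ^ q = u ^ q + v ^ q := by
    intro u v
    rw [hq, hcard]
    exact add_pow_char_pow u v p n
  have cpow : ∀ a : F, (C a : MvPolynomial ℕ F) ^ q = C a := by
    intro a
    rw [← map_pow, hq, FiniteField.pow_card]
  have hdet : M.1 0 0 * M.1 1 1 - M.1 0 1 * M.1 1 0 = 1 := by
    have := M.2
    rwa [Matrix.det_fin_two] at this
  simp only [map_sub, map_mul, map_pow, bind₁_X_right, Matrix.cons_val_zero, Matrix.cons_val_one,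
    Matrix.head_cons, Matrix.cons_val_two, Matrix.tail_cons]
  simp only [frob]
  rw [mul_pow, mul_pow, mul_pow, mul_pow, cpow, cpow, cpow, cpow]
  rw [show (q+1) = 1+q by ring, pow_add, pow_one]
  calc (C (M.1 0 0) * X 0 + C (M.1 0 1) * X 1) *
        (C (M.1 1 0) * (X 0:MvPolynomial ℕ F) ^ q + C (M.1 1 1) * X 1 ^ q)
      - (C (M.1 0 0) * X 0 ^ q + C (M.1 0 1) * X 1 ^ q) * (C (M.1 1 0) * X 0 + C (M.1 1 1) * X 1)
      - X 2 * X 2 ^ q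
      = C (M.1 0 0 * M.1 1 1 - M.1 0 1 * M.1 1 0) * (X 0 * X 1 ^ q - X 0 ^ q * X 1)
        - X 2 * X 2 ^ q := by rw [map_sub, map_mul, map_mul]; ring
    _ = X 0 * X 1 ^ q - X 0 ^ q * X 1 - X 2 * X 2 ^ q := by rw [hdet, map_one, one_mul]
end

section
/- Let F be a finite field with q elements, L a field, and φ : F → L a ring homomorphism. Let (x, y) ∈ L² with (x, y) ≠ (0, 0). Then xy^q = x^qy holds in L if and only if there exist a unit λ ∈ L^× and a pair (a, b) ∈ F² with (a, b) ≠ (0, 0) such that x = λ·φ(a) and y = λ·φ(b). -/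
/-!
The elements of `L` fixed by `z ↦ z ^ q` are the roots of `X ^ q - X`, which already has its `q`
roots `φ(F)`; so they are exactly `φ(F)`. If `y ≠ 0`, the equation says that `x / y` is such a
root, and if `y = 0` then `(x, y) = x • (1, 0)`. Conversely, `x y ^ q - x ^ q y` is homogeneous and
vanishes on `F²`.
-/

open Polynomial

namespace FiniteField

variable {F : Type*} [Field F] [Fintype F]

theorem exists_map_eq_of_pow_card_eq_self {L : Type*} [CommRing L] [IsDomain L] (φ : F →+* L)
    {z : L} (hz : z ^ Fintype.card F = z) : ∃ a, φ a = z := by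
  have hne : ((X ^ Fintype.card F - X : F[X]).map φ) ≠ 0 := by
    rw [Ne, Polynomial.map_eq_zero_iff φ.injective]
    exact X_pow_card_sub_X_ne_zero F Fintype.one_lt_card
  have hroots : (X ^ Fintype.card F - X : F[X]).roots.map φ =
      ((X ^ Fintype.card F - X : F[X]).map φ).roots :=
    roots_map_of_injective_of_card_eq_natDegree φ.injective <| by
      rw [roots_X_pow_card_sub_X, X_pow_card_sub_X_natDegree_eq F Fintype.one_lt_card]; rfl
  have hz_root : z ∈ ((X ^ Fintype.card F - X : F[X]).map φ).roots := by
    rw [mem_roots hne]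
    simp [hz]
  rw [← hroots, roots_X_pow_card_sub_X] at hz_root
  simpa using hz_root

theorem exists_eq_mul_map_of_mul_pow_card_eq {L : Type*} [Field L] (φ : F →+* L) {x y : L} (hy : y ≠ 0)
    (h : x * y ^ Fintype.card F = x ^ Fintype.card F * y) : ∃ a, x = y * φ a := by
  have hfixed : (x / y) ^ Fintype.card F = x / y := by
    rw [div_pow, div_eq_div_iff (pow_ne_zero _ hy) hy, ← h]
  obtain ⟨a, ha⟩ := exists_map_eq_of_pow_card_eq_self φ hfixed
  exact ⟨a, by rw [ha, mul_div_cancel₀ x hy]⟩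

theorem mul_map_mul_pow_card_eq {L : Type*} [CommRing L] (φ : F →+* L) (l : L) (a b : F) :
    l * φ a * (l * φ b) ^ Fintype.card F = (l * φ a) ^ Fintype.card F * (l * φ b) := by
  have hpow (c : F) : φ c ^ Fintype.card F = φ c := by rw [← map_pow, pow_card]
  rw [mul_pow, mul_pow, hpow, hpow]
  ring

end FiniteField

/-- Let `F` be a finite field with `q` elements, `L` a field, `φ : F → L` a ring homomorphism, and
`(x, y) ∈ L²` with `(x, y) ≠ (0, 0)`. Then `xy^q = x^qy` if and only if there are a unit `λ ∈ Lˣ`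
and a pair `(a, b) ∈ F²` with `(a, b) ≠ (0, 0)` such that `x = λ·φ(a)` and `y = λ·φ(b)`. -/
theorem drinfeld_points_at_infinity
    {F : Type*} [Field F] [Fintype F] (q : ℕ) (hq : q = Fintype.card F)
    {L : Type*} [Field L] (φ : F →+* L) (x y : L) (hxy : (x, y) ≠ (0, 0)) :
    x * y ^ q = x ^ q * y ↔
      ∃ (l : Lˣ) (a b : F), (a, b) ≠ (0, 0) ∧ x = (l : L) * φ a ∧ y = (l : L) * φ b := by
  subst hq
  constructor
  · intro h
    by_cases hy : y = 0
    · have hx : x ≠ 0 := by rintro rfl; exact hxy (by rw [hy])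
      exact ⟨Units.mk0 x hx, 1, 0, by simp, by simp, by simp [hy]⟩
    · obtain ⟨a, rfl⟩ := FiniteField.exists_eq_mul_map_of_mul_pow_card_eq φ hy h
      exact ⟨Units.mk0 y hy, a, 1, by simp, rfl, by simp⟩
  · rintro ⟨l, a, b, -, rfl, rfl⟩
    exact FiniteField.mul_map_mul_pow_card_eq φ l a b
end
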